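/- arXiv:2004.13409 — 2 statements merged into one kernel-verified Lean document; each statement's English description precedes it below -/
import Mathlib

section
/- Let λ > 0, a ∈ (0,2), and n ≥ 1 a natural number. Then ∫_0^1 exp(−(1+a(x−1/2))λ) · ((1+a(x−1/2))λ)^{n−1}/(n−1)! dx = (e^{−λ} λ^{n−1}/(n−1)!) · g(n−1), where g(m) = (1/a)·Σ_{j=0}^{m} λ^{−(j+1)} (m!/(m−j)!) ( e^{λa/2}(1−a/2)^{m−j} − e^{−λa/2}(1+a/2)^{m−j} ). -/
/-!
With `S_m(u) = ∑_{k ≤ m} u^k / k!` the truncated exponential series, `-e^{-u} S_m(u)` is an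
antiderivative of `e^{-u} u^m / m!`, because `S_m' = S_{m-1}` and `S_m - S_{m-1} = u^m / m!`.
The substitution `u = (1 + a(x - 1/2))λ` maps `[0, 1]` onto `[(1 - a/2)λ, (1 + a/2)λ]` with
Jacobian `aλ`, so the integral is
`(aλ)⁻¹ (e^{-(1-a/2)λ} S_m((1-a/2)λ) - e^{-(1+a/2)λ} S_m((1+a/2)λ))`; reindexing the sum
defining `g(m)` by `k = m - j` turns the right-hand side into the same expression.
-/

/-- The factor `g(m)` from the linear-approximation model of the URW exit probability. -/
noncomputable def gFactor (lam a : ℝ) (m : ℕ) : ℝ :=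
  (1 / a) * ∑ j ∈ Finset.range (m + 1),
    lam ^ (-(j + 1 : ℤ)) * ((m.factorial : ℝ) / (m - j).factorial) *
      (Real.exp (lam * a / 2) * (1 - a / 2) ^ (m - j)
        - Real.exp (-(lam * a / 2)) * (1 + a / 2) ^ (m - j))

open Finset

noncomputable def expPartialSum (m : ℕ) (u : ℝ) : ℝ :=
  ∑ k ∈ range (m + 1), u ^ k / k.factorial

lemma expPartialSum_succ (m : ℕ) (u : ℝ) :
    expPartialSum (m + 1) u = expPartialSum m u + u ^ (m + 1) / (m + 1).factorial :=
  sum_range_succ _ _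

lemma hasDerivAt_expPartialSum_succ (m : ℕ) (u : ℝ) :
    HasDerivAt (expPartialSum (m + 1)) (expPartialSum m u) u := by
  induction m with
  | zero =>
    have h : expPartialSum 1 = fun v => 1 + v := by
      funext v; simp [expPartialSum, sum_range_succ]
    rw [h]
    simpa [expPartialSum] using (hasDerivAt_id u).const_add 1
  | succ m ih =>
    have hpow : HasDerivAt (fun v : ℝ => v ^ (m + 2) / (m + 2).factorial)
        (u ^ (m + 1) / (m + 1).factorial) u := by
      refine ((hasDerivAt_pow (m + 2) u).div_const _).congr_deriv ?_
      rw [Nat.factorial_succ (m + 1)]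
      push_cast
      field_simp
      ring
    rw [funext (expPartialSum_succ (m + 1)), expPartialSum_succ m]
    exact ih.add hpow

lemma hasDerivAt_exp_neg_mul_expPartialSum (m : ℕ) (u : ℝ) :
    HasDerivAt (fun v => Real.exp (-v) * expPartialSum m v)
      (-(Real.exp (-u) * u ^ m / m.factorial)) u := by
  have hexp : HasDerivAt (fun v => Real.exp (-v)) (-Real.exp (-u)) u := by
    simpa using (hasDerivAt_neg u).exp
  cases m with
  | zero => simpa [expPartialSum] using hexp
  | succ m =>
    refine (hexp.mul (hasDerivAt_expPartialSum_succ m u)).congr_deriv ?_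
    rw [expPartialSum_succ]
    ring

theorem integral_exp_neg_mul_pow_div_factorial (m : ℕ) (p q : ℝ) :
    ∫ u in p..q, Real.exp (-u) * u ^ m / m.factorial =
      Real.exp (-p) * expPartialSum m p - Real.exp (-q) * expPartialSum m q := by
  have hcont : Continuous fun u : ℝ => Real.exp (-u) * u ^ m / m.factorial := by fun_prop
  have hderiv (u : ℝ) : HasDerivAt (fun v => -(Real.exp (-v) * expPartialSum m v))
      (Real.exp (-u) * u ^ m / m.factorial) u :=
    (hasDerivAt_exp_neg_mul_expPartialSum m u).neg.congr_deriv (neg_neg _)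
  rw [intervalIntegral.integral_eq_sub_of_hasDerivAt (fun u _ => hderiv u)
    (hcont.intervalIntegrable p q)]
  ring

lemma zpow_neg_natCast_add_one {α : Type*} [DivInvMonoid α] (x : α) (j : ℕ) :
    x ^ (-(j + 1 : ℤ)) = (x ^ (j + 1))⁻¹ :=
  zpow_negSucc x j

theorem mul_gFactor_eq {lam a : ℝ} (hlam : lam ≠ 0) (ha : a ≠ 0) (m : ℕ) :
    Real.exp (-lam) * lam ^ m / m.factorial * gFactor lam a m =
      (a * lam)⁻¹ * (Real.exp (-((1 - a / 2) * lam)) * expPartialSum m ((1 - a / 2) * lam)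
        - Real.exp (-((1 + a / 2) * lam)) * expPartialSum m ((1 + a / 2) * lam)) := by
  simp only [gFactor, expPartialSum, mul_sum, ← sum_sub_distrib]
  rw [← sum_range_reflect]
  refine sum_congr rfl fun k hk => ?_
  have hkm : k ≤ m := Nat.lt_succ_iff.mp (mem_range.mp hk)
  rw [Nat.add_sub_cancel, Nat.sub_sub_self hkm, zpow_neg_natCast_add_one,
    show lam ^ m = lam ^ (m - k) * lam ^ k by rw [← pow_add, Nat.sub_add_cancel hkm],
    show -((1 - a / 2) * lam) = -lam + lam * a / 2 by ring,
    show -((1 + a / 2) * lam) = -lam + -(lam * a / 2) by ring, Real.exp_add, Real.exp_add,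
    mul_pow, mul_pow]
  field_simp
  ring

theorem stmt_2_general (lam a : ℝ) (hlam : 0 < lam) (ha : 0 < a)
    (n : ℕ) :
    (∫ x in (0:ℝ)..1,
        Real.exp (-((1 + a * (x - 1 / 2)) * lam)) * ((1 + a * (x - 1 / 2)) * lam) ^ (n - 1)
          / (n - 1).factorial) =
      (Real.exp (-lam) * lam ^ (n - 1) / (n - 1).factorial) * gFactor lam a (n - 1) := by
  have hscale (x : ℝ) : (1 + a * (x - 1 / 2)) * lam = a * lam * x + (1 - a / 2) * lam := by
    ring
  simp_rw [hscale]
  rw [intervalIntegral.integral_comp_mul_add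
      (fun u => Real.exp (-u) * u ^ (n - 1) / (n - 1).factorial) (by positivity),
    integral_exp_neg_mul_pow_div_factorial, mul_gFactor_eq hlam.ne' ha.ne', smul_eq_mul,
    mul_zero, zero_add, mul_one,
    show a * lam + (1 - a / 2) * lam = (1 + a / 2) * lam by ring]

/-- P_URW(n) = P_U(n) · g(n-1) for the linear exit-probability profile e(x) = 1 + a(x - 1/2). -/
theorem stmt_2 (lam a : ℝ) (hlam : 0 < lam) (ha : 0 < a) (ha2 : a < 2)
    (n : ℕ) (hn : 1 ≤ n) :
    (∫ x in (0:ℝ)..1,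
        Real.exp (-((1 + a * (x - 1 / 2)) * lam)) * ((1 + a * (x - 1 / 2)) * lam) ^ (n - 1)
          / (n - 1).factorial) =
      (Real.exp (-lam) * lam ^ (n - 1) / (n - 1).factorial) * gFactor lam a (n - 1) :=
  stmt_2_general lam a hlam ha n
end

section
/- Let λ > 0, a ∈ (0,2), and n ≥ 1 a natural number. Then ∫_0^1 exp(−(1+a(x−1/2))λ) · ((1+a(x−1/2))λ)^{n−1}/(n−1)! · (1+a(x−1/2)) dx = (e^{−λ} λ^{n−1}/(n−1)!) · g(n), where g(m) = (1/a)·Σ_{j=0}^{m} λ^{−(j+1)} (m!/(m−j)!) ( e^{λa/2}(1−a/2)^{m−j} − e^{−λa/2}(1+a/2)^{m−j} ). -/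
open Finset Real

/-- `expPoly m u = m! · ∑_{i ≤ m} u^i / i!`, written in the indexing of `gFactor`. -/
noncomputable def expPoly (m : ℕ) (u : ℝ) : ℝ :=
  ∑ j ∈ range (m + 1), ((m.factorial : ℝ) / (m - j).factorial) * u ^ (m - j)

lemma hasDerivAt_expPoly (m : ℕ) (u : ℝ) :
    HasDerivAt (expPoly m) (expPoly m u - u ^ m) u := by
  have hderiv : HasDerivAt (expPoly m)
      (∑ j ∈ range (m + 1),
        (m.factorial : ℝ) / (m - j).factorial * ((m - j : ℕ) * u ^ (m - j - 1))) u :=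
    HasDerivAt.fun_sum fun j _ => (hasDerivAt_pow (m - j) u).const_mul _
  convert hderiv using 1
  rw [expPoly, sum_range_succ', sum_range_succ, Nat.sub_self, Nat.sub_zero,
    div_self (by positivity), Nat.cast_zero, zero_mul, mul_zero, add_zero, one_mul,
    add_sub_cancel_right]
  refine sum_congr rfl fun j hj => ?_
  obtain ⟨i, hi⟩ : ∃ i, m - j = i + 1 := ⟨m - j - 1, by have := mem_range.mp hj; omega⟩
  rw [show m - (j + 1) = i by omega, hi, Nat.add_sub_cancel, Nat.factorial_succ]
  push_cast
  field_simp

lemma hasDerivAt_neg_exp_neg_mul_expPoly (m : ℕ) (u : ℝ) :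
    HasDerivAt (fun u => -(exp (-u) * expPoly m u)) (exp (-u) * u ^ m) u := by
  refine ((hasDerivAt_neg u).exp.fun_mul (hasDerivAt_expPoly m u)).fun_neg.congr_deriv ?_
  ring

lemma integral_exp_neg_mul_pow (m : ℕ) (α β : ℝ) :
    ∫ u in α..β, exp (-u) * u ^ m = exp (-α) * expPoly m α - exp (-β) * expPoly m β := by
  rw [intervalIntegral.integral_eq_sub_of_hasDerivAt
    (fun u _ => hasDerivAt_neg_exp_neg_mul_expPoly m u)
    ((by fun_prop : Continuous _).intervalIntegrable _ _)]
  ring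

lemma gFactor_eq (lam a : ℝ) (hlam : lam ≠ 0) (m : ℕ) :
    gFactor lam a m = exp lam / (a * lam ^ (m + 1)) *
      (exp (-((1 - a / 2) * lam)) * expPoly m ((1 - a / 2) * lam)
        - exp (-((1 + a / 2) * lam)) * expPoly m ((1 + a / 2) * lam)) := by
  rw [gFactor, expPoly, expPoly]
  simp only [mul_sum, ← sum_sub_distrib]
  refine sum_congr rfl fun j hj => ?_
  have hj : j ≤ m := Nat.lt_succ_iff.mp (mem_range.mp hj)
  have hpow : lam ^ (-(j + 1 : ℤ)) = lam ^ (m - j) / lam ^ (m + 1) := by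
    rw [← zpow_natCast, ← zpow_natCast, ← zpow_sub₀ hlam]
    push_cast [hj]
    congr 1
    ring
  have hexp₁ : exp (-((1 - a / 2) * lam)) = exp (lam * a / 2) / exp lam := by
    rw [eq_div_iff (exp_pos _).ne', ← exp_add]
    ring_nf
  have hexp₂ : exp (-((1 + a / 2) * lam)) = exp (-(lam * a / 2)) / exp lam := by
    rw [eq_div_iff (exp_pos _).ne', ← exp_add]
    ring_nf
  rw [hpow, hexp₁, hexp₂, mul_pow, mul_pow]
  field_simp

theorem stmt_7_general (lam a : ℝ) (hlam : 0 < lam) (ha : 0 < a)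
    (n : ℕ) (hn : 1 ≤ n) :
    (∫ x in (0:ℝ)..1,
        Real.exp (-((1 + a * (x - 1 / 2)) * lam)) * ((1 + a * (x - 1 / 2)) * lam) ^ (n - 1)
          / (n - 1).factorial * (1 + a * (x - 1 / 2))) =
      (Real.exp (-lam) * lam ^ (n - 1) / (n - 1).factorial) * gFactor lam a n := by
  obtain ⟨k, rfl⟩ := Nat.exists_eq_add_of_le' hn
  have hscale : a * lam ≠ 0 := by positivity
  have hintegrand (x : ℝ) :
      exp (-((1 + a * (x - 1 / 2)) * lam)) * ((1 + a * (x - 1 / 2)) * lam) ^ k / k.factorial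
          * (1 + a * (x - 1 / 2)) =
        (lam * k.factorial)⁻¹ *
          (fun u => exp (-u) * u ^ (k + 1)) (a * lam * x + (1 - a / 2) * lam) := by
    rw [show a * lam * x + (1 - a / 2) * lam = (1 + a * (x - 1 / 2)) * lam by ring]
    field_simp
    ring
  have hupper : a * lam * 1 + (1 - a / 2) * lam = (1 + a / 2) * lam := by ring
  rw [Nat.add_sub_cancel, intervalIntegral.integral_congr (fun x _ => hintegrand x),
    intervalIntegral.integral_const_mul,
    intervalIntegral.integral_comp_mul_add (fun u => exp (-u) * u ^ (k + 1)) hscale,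
    mul_zero, zero_add, hupper, smul_eq_mul, integral_exp_neg_mul_pow, gFactor_eq lam a hlam.ne',
    exp_neg lam]
  field_simp
  ring

/-- Unnormalized numerator of P*_URW(n): weighting the Poisson mass by the exit probability
e(x) = 1 + a(x - 1/2) gives P_U(n) · g(n). -/
theorem stmt_7 (lam a : ℝ) (hlam : 0 < lam) (ha : 0 < a) (ha2 : a < 2)
    (n : ℕ) (hn : 1 ≤ n) :
    (∫ x in (0:ℝ)..1,
        Real.exp (-((1 + a * (x - 1 / 2)) * lam)) * ((1 + a * (x - 1 / 2)) * lam) ^ (n - 1)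
          / (n - 1).factorial * (1 + a * (x - 1 / 2))) =
      (Real.exp (-lam) * lam ^ (n - 1) / (n - 1).factorial) * gFactor lam a n :=
  stmt_7_general lam a hlam ha n hn
end
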